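/- Let m, d, N be positive integers, F : ℝ^m → ℝ^{m×d} any matrix-valued map, and λ > 0. Let ζ_1, …, ζ_N > 0 be weights and n_1, …, n_N ∈ ℝ^d be vectors satisfying the closed-surface condition Σ_{j=1}^N ζ_j n_j = 0, and set S = Σ_{j=1}^N ζ_j. Define the multi-dimensional local Lax–Friedrichs flux F̂_λ(U_L, U_R, n) = ½(F(U_L) + F(U_R)) n − (λ/2)(U_R − U_L) ∈ ℝ^m. Then for any states U_1, …, U_N ∈ ℝ^m, the intermediate state U* = (1/S) Σ_{j=1}^N ζ_j [U_j − (1/λ) F(U_j) n_j] satisfies Σ_{j=1}^N ζ_j F̂_λ(U_j, U*, −n_j) = 0. -/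

import Mathlib

/-! Against a common right state `V`, the weighted flux sum splits into the weighted sum of the
left fluxes `F(U_j) n_j`, the term `F(V) Σ ζ_j n_j`, which the closed-surface condition kills, and
the dissipation `λ (S V − Σ ζ_j U_j)`. The intermediate state is defined so that
`λ (S U* − Σ ζ_j U_j) = −Σ ζ_j F(U_j) n_j`, which cancels the left fluxes in directions `−n_j`. -/

open Matrix

/-- The multi-dimensional local Lax–Friedrichs numerical flux in direction
`n ∈ ℝ^d` with dissipation coefficient `lam`, for a matrix-valued flux map
`F : ℝ^m → ℝ^{m×d}`:
`F̂(U_L, U_R, n) = ½(F U_L + F U_R) n − (lam/2)(U_R − U_L)`. -/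
noncomputable def llfFluxMD {m d : ℕ} (F : (Fin m → ℝ) → Matrix (Fin m) (Fin d) ℝ)
    (lam : ℝ) (UL UR : Fin m → ℝ) (n : Fin d → ℝ) : Fin m → ℝ :=
  (1 / 2 : ℝ) • ((F UL + F UR).mulVec n) - (lam / 2) • (UR - UL)

section WeightedSums

variable {ι : Type*} [Fintype ι] {m d : ℕ}

theorem sum_smul_mulVec_eq_zero_of_sum_smul_eq_zero (M : Matrix (Fin m) (Fin d) ℝ)
    (ζ : ι → ℝ) (n : ι → Fin d → ℝ) (hclosed : ∑ i, ζ i • n i = 0) :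
    ∑ i, ζ i • M *ᵥ n i = 0 := by
  simp_rw [← mulVec_smul, ← mulVec_sum, hclosed, mulVec_zero]

theorem sum_smul_llfFluxMD_of_sum_smul_eq_zero
    (F : (Fin m → ℝ) → Matrix (Fin m) (Fin d) ℝ) (lam : ℝ)
    (ζ : ι → ℝ) (n : ι → Fin d → ℝ) (hclosed : ∑ i, ζ i • n i = 0)
    (U : ι → Fin m → ℝ) (V : Fin m → ℝ) :
    ∑ i, ζ i • llfFluxMD F lam (U i) V (n i) =
      (1 / 2 : ℝ) • ∑ i, ζ i • F (U i) *ᵥ n i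
        - (lam / 2) • ((∑ i, ζ i) • V - ∑ i, ζ i • U i) := by
  have hterm : ∀ i, ζ i • llfFluxMD F lam (U i) V (n i) =
      (1 / 2 : ℝ) • (ζ i • F (U i) *ᵥ n i) + (1 / 2 : ℝ) • (ζ i • F V *ᵥ n i)
        - (lam / 2) • (ζ i • V - ζ i • U i) := by
    intro i
    simp only [llfFluxMD, add_mulVec]
    module
  simp only [hterm, Finset.sum_sub_distrib, Finset.sum_add_distrib, ← Finset.smul_sum,
    ← Finset.sum_smul, sum_smul_mulVec_eq_zero_of_sum_smul_eq_zero (F V) ζ n hclosed,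
    smul_zero, add_zero]

end WeightedSums

theorem multiD_intermediate_state_flux_cancellation_general
    (m d N : ℕ) (hN : 0 < N)
    (F : (Fin m → ℝ) → Matrix (Fin m) (Fin d) ℝ) (lam : ℝ) (hlam : 0 < lam)
    (ζ : Fin N → ℝ) (hζ : ∀ j, 0 < ζ j)
    (n : Fin N → Fin d → ℝ) (hclosed : ∑ j, ζ j • n j = 0)
    (S : ℝ) (hS : S = ∑ j, ζ j)
    (U : Fin N → Fin m → ℝ)
    (Ustar : Fin m → ℝ)
    (hUstar : Ustar =
      (1 / S) • ∑ j, ζ j • (U j - (1 / lam) • (F (U j)).mulVec (n j))) :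
    ∑ j, ζ j • llfFluxMD F lam (U j) Ustar (-(n j)) = 0 := by
  have hS0 : S ≠ 0 := by
    have : Nonempty (Fin N) := ⟨⟨0, hN⟩⟩
    exact hS ▸ (Finset.sum_pos (fun j _ => hζ j) Finset.univ_nonempty).ne'
  have hclosed_neg : ∑ j, ζ j • -n j = 0 := by
    simp only [smul_neg, Finset.sum_neg_distrib, hclosed, neg_zero]
  set A := ∑ j, ζ j • F (U j) *ᵥ n j
  set B := ∑ j, ζ j • U j
  have hSUstar : S • Ustar = B - (1 / lam) • A := by
    rw [hUstar, smul_smul, mul_one_div_cancel hS0, one_smul, Finset.smul_sum,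
      ← Finset.sum_sub_distrib]
    simp only [smul_sub, smul_comm (ζ _) (1 / lam)]
  rw [sum_smul_llfFluxMD_of_sum_smul_eq_zero F lam ζ (fun j => -n j) hclosed_neg U Ustar, ← hS,
    hSUstar]
  simp only [mulVec_neg, smul_neg, Finset.sum_neg_distrib]
  match_scalars <;> field_simp <;> ring

/-- for positive weights `ζ_j` and directions `n_j` satisfying the
closed-surface condition `Σ ζ_j n_j = 0`, the intermediate state
`U* = (1/S) Σ ζ_j [U_j − (1/λ) F(U_j) n_j]` (with `S = Σ ζ_j`) satisfies
`Σ_j ζ_j F̂_λ(U_j, U*, −n_j) = 0`. -/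
theorem multiD_intermediate_state_flux_cancellation
    (m d N : ℕ) (hm : 0 < m) (hd : 0 < d) (hN : 0 < N)
    (F : (Fin m → ℝ) → Matrix (Fin m) (Fin d) ℝ) (lam : ℝ) (hlam : 0 < lam)
    (ζ : Fin N → ℝ) (hζ : ∀ j, 0 < ζ j)
    (n : Fin N → Fin d → ℝ) (hclosed : ∑ j, ζ j • n j = 0)
    (S : ℝ) (hS : S = ∑ j, ζ j)
    (U : Fin N → Fin m → ℝ)
    (Ustar : Fin m → ℝ)
    (hUstar : Ustar =
      (1 / S) • ∑ j, ζ j • (U j - (1 / lam) • (F (U j)).mulVec (n j))) :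
    ∑ j, ζ j • llfFluxMD F lam (U j) Ustar (-(n j)) = 0 :=
  multiD_intermediate_state_flux_cancellation_general m d N hN F lam hlam ζ hζ n hclosed S hS U
    Ustar hUstar
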